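/- arXiv:1604.01610 — 2 statements merged into one kernel-verified Lean document; each statement's English description precedes it below -/
import Mathlib

section
/- Let 𝕂 be ℝ or ℂ, let m ≥ k ≥ 1 be integers, let n_1, …, n_k be positive integers with n_1 + ⋯ + n_k = m, let r ∈ (0, ∞), and let p be a real number with m < p ≤ 2m. Suppose s ≥ 0 and there is a constant D ≥ 1 such that ( ∑_{i_1,…,i_k=1}^{n} |T(e_{i_1}^{n_1}, …, e_{i_k}^{n_k})|^{r} )^{1/r} ≤ D · n^{s} · ‖T‖ for every positive integer n and every m-linear form T : ℓ_p^n × ⋯ × ℓ_p^n → 𝕂. Then s ≥ max{ (p − rp + rm)/(pr), 0 }. -/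
/-!
Test the inequality against the diagonal form `T(x₁, …, x_m) = ∑ⱼ ∏ₜ xₜ(j)` on `ℓ_p^n`. Its
coefficient at every constant index tuple is `1`, so the left-hand side is at least `n^{1/r}`,
while AM-GM in each coordinate followed by the comparison of `ℓ_m` with `ℓ_p` norms gives
`‖T‖ ≤ n^{1 - m/p}`. Thus `n^{1/r} ≤ D n^{s + 1 - m/p}` for all `n`, which forces
`1/r ≤ s + 1 - m/p`.
-/
open Finset

theorem ContinuousMultilinearMap.opNorm_le_of_unit_norm_le {𝕜 ι G : Type*} {E : ι → Type*}
    [RCLike 𝕜] [Fintype ι] [∀ i, NormedAddCommGroup (E i)] [∀ i, NormedSpace 𝕜 (E i)]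
    [SeminormedAddCommGroup G] [NormedSpace 𝕜 G] (f : ContinuousMultilinearMap 𝕜 E G)
    {C : ℝ} (hC : 0 ≤ C) (h : ∀ x, (∀ i, ‖x i‖ ≤ 1) → ‖f x‖ ≤ C) : ‖f‖ ≤ C := by
  refine f.opNorm_le_bound hC fun x => ?_
  by_cases hx : ∃ i, x i = 0
  · obtain ⟨i, hi⟩ := hx
    rw [f.map_coord_zero i hi, norm_zero]
    positivity
  simp only [not_exists] at hx
  set y : ∀ i, E i := fun i => (‖x i‖⁻¹ : 𝕜) • x i
  have hy : ∀ i, ‖y i‖ = 1 := fun i => by simp [y, norm_smul, hx i]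
  have hxy : x = fun i => (‖x i‖ : 𝕜) • y i := by
    funext i
    simp [y, smul_smul, hx i]
  calc ‖f x‖ = (∏ i, ‖x i‖) * ‖f y‖ := by
        conv_lhs => rw [hxy, f.map_smul_univ, norm_smul, norm_prod]
        simp
    _ ≤ (∏ i, ‖x i‖) * C := by gcongr; exact h y fun i => (hy i).le
    _ = C * ∏ i, ‖x i‖ := mul_comm _ _

theorem Real.prod_le_inv_card_mul_sum_rpow_card {ι : Type*} [Fintype ι] [Nonempty ι]
    {a : ι → ℝ} (ha : ∀ t, 0 ≤ a t) :
    ∏ t, a t ≤ (Fintype.card ι : ℝ)⁻¹ * ∑ t, a t ^ (Fintype.card ι : ℝ) := by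
  have hm : (Fintype.card ι : ℝ) ≠ 0 := by positivity
  calc ∏ t, a t = ∏ t, (a t ^ (Fintype.card ι : ℝ)) ^ (Fintype.card ι : ℝ)⁻¹ := by
        refine prod_congr rfl fun t _ => ?_
        rw [← Real.rpow_mul (ha t), mul_inv_cancel₀ hm, Real.rpow_one]
    _ ≤ ∑ t, (Fintype.card ι : ℝ)⁻¹ * a t ^ (Fintype.card ι : ℝ) :=
        Real.geom_mean_le_arith_mean_weighted univ _ _ (fun _ _ => by positivity)
          (by simp [hm]) (fun t _ => by have := ha t; positivity)
    _ = _ := by rw [mul_sum]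

theorem Real.sum_rpow_le_card_rpow_of_sum_rpow_le_one {κ : Type*} [Fintype κ] {b : κ → ℝ}
    (hb : ∀ j, 0 ≤ b j) {p q : ℝ} (hq : 0 < q) (hqp : q ≤ p) (h : ∑ j, b j ^ p ≤ 1) :
    ∑ j, b j ^ q ≤ (Fintype.card κ : ℝ) ^ (1 - q / p) := by
  have hp : 0 < p := hq.trans_le hqp
  calc ∑ j, b j ^ q = ∑ j, 1 * b j ^ q := by simp
    _ ≤ (∑ _j : κ, (1 : ℝ)) ^ (1 - (p / q)⁻¹) * (∑ j, 1 * (b j ^ q) ^ (p / q)) ^ (p / q)⁻¹ :=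
        Real.inner_le_weight_mul_Lp_of_nonneg univ ((one_le_div hq).2 hqp) _ _
          (fun _ => zero_le_one) fun j => by have := hb j; positivity
    _ = (Fintype.card κ : ℝ) ^ (1 - q / p) * (∑ j, b j ^ p) ^ (q / p) := by
        simp only [sum_const, card_univ, nsmul_eq_mul, mul_one, one_mul, inv_div]
        congr 2
        refine sum_congr rfl fun j _ => ?_
        rw [← Real.rpow_mul (hb j), mul_div_cancel₀ _ hq.ne']
    _ ≤ (Fintype.card κ : ℝ) ^ (1 - q / p) * 1 := by
        gcongr
        exact Real.rpow_le_one (sum_nonneg fun j _ => by have := hb j; positivity) h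
          (by positivity)
    _ = _ := mul_one _

theorem Real.sum_prod_le_card_rpow {ι κ : Type*} [Fintype ι] [Nonempty ι] [Fintype κ]
    {a : ι → κ → ℝ} (ha : ∀ t j, 0 ≤ a t j) {p : ℝ} (hp : (Fintype.card ι : ℝ) ≤ p)
    (h : ∀ t, ∑ j, a t j ^ p ≤ 1) :
    ∑ j, ∏ t, a t j ≤ (Fintype.card κ : ℝ) ^ (1 - Fintype.card ι / p) := by
  set m : ℝ := (Fintype.card ι : ℝ)
  have hm : 0 < m := by positivity
  calc ∑ j, ∏ t, a t j ≤ ∑ j, m⁻¹ * ∑ t, a t j ^ m :=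
        sum_le_sum fun j _ => Real.prod_le_inv_card_mul_sum_rpow_card fun t => ha t j
    _ = m⁻¹ * ∑ t, ∑ j, a t j ^ m := by rw [← mul_sum, sum_comm]
    _ ≤ m⁻¹ * ∑ _t : ι, (Fintype.card κ : ℝ) ^ (1 - m / p) := by
        gcongr with t
        exact Real.sum_rpow_le_card_rpow_of_sum_rpow_le_one (ha t) hm hp (h t)
    _ = _ := by simp [m, hm.ne']

theorem le_of_forall_natCast_rpow_le_mul_rpow {a b C : ℝ}
    (h : ∀ n : ℕ, 0 < n → (n : ℝ) ^ a ≤ C * (n : ℝ) ^ b) : a ≤ b := by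
  by_contra! hab
  have hbound : ∀ n : ℕ, 0 < n → (n : ℝ) ^ (a - b) ≤ C := fun n hn => by
    have hn : (0 : ℝ) < n := by exact_mod_cast hn
    rw [Real.rpow_sub hn, div_le_iff₀ (by positivity)]
    exact h n (by exact_mod_cast hn)
  have htend : Filter.Tendsto (fun n : ℕ => (n : ℝ) ^ (a - b)) Filter.atTop Filter.atTop :=
    (tendsto_rpow_atTop (sub_pos.2 hab)).comp tendsto_natCast_atTop_atTop
  obtain ⟨n, hnC, hn⟩ := ((htend.eventually_gt_atTop C).and (Filter.eventually_gt_atTop 0)).exists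
  exact (hbound n hn).not_gt hnC

section DiagonalForm

variable (𝕂 : Type*) [RCLike 𝕂] (ι κ : Type*) [Fintype ι] [Fintype κ]

noncomputable def diagonalForm (q : ENNReal) [Fact (1 ≤ q)] :
    ContinuousMultilinearMap 𝕂 (fun _ : ι => PiLp q (fun _ : κ => 𝕂)) 𝕂 :=
  ∑ j : κ, (ContinuousMultilinearMap.mkPiAlgebra 𝕂 ι 𝕂).compContinuousLinearMap
    fun _ => PiLp.proj q (fun _ : κ => 𝕂) j

variable {𝕂 ι κ}

theorem diagonalForm_apply (q : ENNReal) [Fact (1 ≤ q)] (x : ι → PiLp q (fun _ : κ => 𝕂)) :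
    diagonalForm 𝕂 ι κ q x = ∑ j, ∏ t, x t j := by
  simp [diagonalForm]

theorem diagonalForm_const_single [Nonempty ι] [DecidableEq κ] (q : ENNReal) [Fact (1 ≤ q)]
    (c : κ) :
    diagonalForm 𝕂 ι κ q (fun _ => (WithLp.equiv q (κ → 𝕂)).symm (Pi.single c 1)) = 1 := by
  simp [diagonalForm_apply]

theorem norm_diagonalForm_le [Nonempty ι] {p : ℝ} [Fact (1 ≤ ENNReal.ofReal p)]
    (hp : (Fintype.card ι : ℝ) ≤ p) :
    ‖diagonalForm 𝕂 ι κ (ENNReal.ofReal p)‖ ≤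
      (Fintype.card κ : ℝ) ^ (1 - Fintype.card ι / p) := by
  have hp0 : 0 < p := lt_of_lt_of_le (by positivity) hp
  refine ContinuousMultilinearMap.opNorm_le_of_unit_norm_le _ (by positivity) fun x hx => ?_
  have hx' : ∀ t, ∑ j, ‖x t j‖ ^ p ≤ 1 := fun t => by
    have h := hx t
    rwa [PiLp.norm_eq_sum (by rwa [ENNReal.toReal_ofReal hp0.le]), ENNReal.toReal_ofReal hp0.le,
      one_div, Real.rpow_inv_le_iff_of_pos (by positivity) zero_le_one hp0, Real.one_rpow] at h
  calc ‖diagonalForm 𝕂 ι κ (ENNReal.ofReal p) x‖ ≤ ∑ j, ∏ t, ‖x t j‖ := by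
        rw [diagonalForm_apply]
        refine (norm_sum_le _ _).trans_eq ?_
        simp only [norm_prod]
    _ ≤ _ := Real.sum_prod_le_card_rpow (fun _ _ => norm_nonneg _) hp hx'

theorem card_le_sum_norm_diagonalForm_single_rpow {ι' : Type*} [Fintype ι'] [DecidableEq ι']
    [Nonempty ι] [DecidableEq κ] (q : ENNReal) [Fact (1 ≤ q)] (f : ι → ι') (r : ℝ) :
    (Fintype.card κ : ℝ) ≤ ∑ i : ι' → κ,
      ‖diagonalForm 𝕂 ι κ q
        (fun t => (WithLp.equiv q (κ → 𝕂)).symm (Pi.single (i (f t)) 1))‖ ^ r := by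
  have : Nonempty ι' := .map f ‹_›
  calc (Fintype.card κ : ℝ) = ∑ i ∈ univ.image (Function.const ι'),
        ‖diagonalForm 𝕂 ι κ q
          (fun t => (WithLp.equiv q (κ → 𝕂)).symm (Pi.single (i (f t)) 1))‖ ^ r := by
        rw [sum_image fun _ _ _ _ h => Function.const_injective h]
        simp only [Function.const_apply, diagonalForm_const_single, norm_one, Real.one_rpow,
          sum_const, card_univ, nsmul_eq_mul, mul_one]
    _ ≤ _ := sum_le_univ_sum_of_nonneg fun _ => by positivity

end DiagonalForm

/-- **Optimality of the exponent of `n` in part (b) of the main theorem.**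
For `r ∈ (0,∞)` and `m < p ≤ 2m`: if `s ≥ 0` and `D ≥ 1` are such that
`(∑_{i₁,…,i_k=1}^n |T(e_{i₁}^{n₁}, …, e_{i_k}^{n_k})|^r)^{1/r} ≤ D ⬝ n^s ⬝ ‖T‖`
for every `n ≥ 1` and every `m`-linear form `T : ℓ_p^n × ⋯ × ℓ_p^n → 𝕂`, then
`s ≥ max{(p - rp + rm)/(pr), 0}`. -/
theorem stmt9 (𝕂 : Type*) [RCLike 𝕂] (m k : ℕ) (hk : 1 ≤ k) (hkm : k ≤ m)
    (ν : Fin k → ℕ) (hsum : ∑ j, ν j = m)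
    (r : ℝ) (hr : 0 < r) (p : ℝ) (hmp : (m : ℝ) < p)
    (s : ℝ) (hs : 0 ≤ s) (D : ℝ) (hD : 1 ≤ D)
    (hineq : ∀ n : ℕ, 0 < n →
      haveI : Fact (1 ≤ ENNReal.ofReal p) := ⟨ENNReal.one_le_ofReal.mpr (by
        have h1 : (1 : ℝ) ≤ (m : ℝ) := by exact_mod_cast hk.trans hkm
        linarith)⟩
      ∀ T : ContinuousMultilinearMap 𝕂
          (fun _ : (Σ j : Fin k, Fin (ν j)) => PiLp (ENNReal.ofReal p) (fun _ : Fin n => 𝕂)) 𝕂,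
        (∑ i : Fin k → Fin n,
            ‖T (fun t => (WithLp.equiv (ENNReal.ofReal p) (Fin n → 𝕂)).symm
                (Pi.single (i t.1) 1))‖ ^ r) ^ (1 / r)
          ≤ D * (n : ℝ) ^ s * ‖T‖) :
    max ((p - r * p + r * m) / (p * r)) 0 ≤ s := by
  have hm : (1 : ℝ) ≤ m := by exact_mod_cast hk.trans hkm
  have : Fact (1 ≤ ENNReal.ofReal p) := ⟨ENNReal.one_le_ofReal.mpr (by linarith)⟩
  have hcard : Fintype.card (Σ j : Fin k, Fin (ν j)) = m := by simpa using hsum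
  have : Nonempty (Σ j : Fin k, Fin (ν j)) := Fintype.card_pos_iff.1 (by omega)
  have hpow : ∀ n : ℕ, 0 < n → (n : ℝ) ^ (1 / r) ≤ D * (n : ℝ) ^ (s + (1 - m / p)) := by
    intro n hn
    set T := diagonalForm 𝕂 (Σ j : Fin k, Fin (ν j)) (Fin n) (ENNReal.ofReal p)
    have hT : ‖T‖ ≤ (n : ℝ) ^ (1 - m / p) := by
      have h := norm_diagonalForm_le (𝕂 := 𝕂) (κ := Fin n) (p := p) (by rw [hcard]; exact hmp.le)
      rwa [hcard, Fintype.card_fin] at h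
    calc (n : ℝ) ^ (1 / r) ≤ D * (n : ℝ) ^ s * ‖T‖ := by
          refine le_trans ?_ (hineq n hn T)
          gcongr
          simpa using card_le_sum_norm_diagonalForm_single_rpow (𝕂 := 𝕂) (κ := Fin n)
            (ι' := Fin k) (ENNReal.ofReal p) Sigma.fst r
      _ ≤ D * (n : ℝ) ^ s * (n : ℝ) ^ (1 - m / p) := by gcongr
      _ = D * (n : ℝ) ^ (s + (1 - m / p)) := by
          rw [mul_assoc, Real.rpow_add (by exact_mod_cast hn)]
  have hexp := le_of_forall_natCast_rpow_le_mul_rpow hpow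
  have hp0 : 0 < p := by linarith
  refine max_le ?_ hs
  calc (p - r * p + r * m) / (p * r) = 1 / r - (1 - m / p) := by field_simp; ring
    _ ≤ s := by linarith
end

section
/- (Aron–Globevnik diagonal inequality.) Let 𝕂 be ℝ or ℂ and let m be a positive integer. There is a constant C ≥ 1 (depending only on m and 𝕂, not on n) such that for every positive integer n and every m-linear form T : ℓ_∞^n × ⋯ × ℓ_∞^n → 𝕂, one has ∑_{j=1}^{n} |T(e_j, e_j, …, e_j)| ≤ C · ‖T‖. -/
/-!
Average `T` over independent sign vectors `ε₁, …, ε_{m-1} ∈ {±1}ⁿ`, feeding it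
`∑ⱼ θⱼ ε₁(j)⋯ε_{m-1}(j) eⱼ` in the first slot and `∑ₗ εₖ(l) eₗ` in slot `k + 1`. All these vectors
have sup norm at most `1` when `|θⱼ| ≤ 1`, and since `𝔼[ε(j) ε(l)] = δⱼₗ` the average equals
`∑ⱼ θⱼ T(eⱼ, …, eⱼ)`. Taking `θⱼ = conj aⱼ / |aⱼ|` with `aⱼ = T(eⱼ, …, eⱼ)` gives the inequality
with `C = 1`.
-/

open Finset

def boolSign {R : Type*} [Ring R] (b : Bool) : R := if b then 1 else -1

section Signs

variable {R : Type*} [CommRing R] {ι : Type*} [Fintype ι] [DecidableEq ι]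

lemma boolSign_mul_self (b : Bool) : (boolSign b : R) * boolSign b = 1 := by
  cases b <;> simp [boolSign]

lemma sum_boolSign_mul_boolSign (p q : ι) :
    ∑ η : ι → Bool, (boolSign (η p) : R) * boolSign (η q) =
      if p = q then 2 ^ Fintype.card ι else 0 := by
  split_ifs with hpq
  · simp [hpq, boolSign_mul_self]
  · have hfactor : ∀ η : ι → Bool, (boolSign (η p) : R) * boolSign (η q) =
        ∏ j, (if j = p then boolSign (η j) else 1) * (if j = q then boolSign (η j) else 1) := by
      intro η
      rw [prod_mul_distrib, Fintype.prod_ite_eq', Fintype.prod_ite_eq']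
    -- after swapping sum and product, the factor at `j = p` is `∑ b, boolSign b = 0`
    simp_rw [hfactor]
    rw [← Fintype.prod_sum (fun j (b : Bool) =>
      ((if j = p then boolSign b else 1) * (if j = q then boolSign b else 1) : R))]
    exact prod_eq_zero (mem_univ p) (by simp [hpq, boolSign])

variable {M : Type*} [AddCommGroup M] [Module R M]

lemma sum_boolSign_smul_sum_boolSign_smul (e : ι → M) (j : ι) :
    ∑ η : ι → Bool, (boolSign (η j) : R) • ∑ l, (boolSign (η l) : R) • e l =
      (2 ^ Fintype.card ι : R) • e j := by
  simp_rw [smul_sum, smul_smul]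
  rw [sum_comm]
  simp_rw [← sum_smul, sum_boolSign_mul_boolSign, ite_smul, zero_smul, sum_ite_eq,
    if_pos (mem_univ _)]

end Signs

namespace MultilinearMap

variable {R : Type*} [CommRing R] {ι : Type*} [Fintype ι] [DecidableEq ι]
  {M N : Type*} [AddCommGroup M] [Module R M] [AddCommGroup N] [Module R N] {m : ℕ}

lemma sum_prod_boolSign_smul_apply (S : MultilinearMap R (fun _ : Fin m => M) N) (e : ι → M)
    (j : ι) :
    ∑ ε : Fin m → ι → Bool,
        (∏ k, (boolSign (ε k j) : R)) • S (fun k => ∑ l, (boolSign (ε k l) : R) • e l) =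
      (2 ^ Fintype.card ι : R) ^ m • S (fun _ => e j) := by
  calc _ = ∑ ε : Fin m → ι → Bool,
          S (fun k => (boolSign (ε k j) : R) • ∑ l, (boolSign (ε k l) : R) • e l) := by
        simp_rw [S.map_smul_univ]
    _ = S (fun _ => ∑ η : ι → Bool, (boolSign (η j) : R) • ∑ l, (boolSign (η l) : R) • e l) :=
        (S.map_sum fun _ (η : ι → Bool) =>
          (boolSign (η j) : R) • ∑ l, (boolSign (η l) : R) • e l).symm
    _ = _ := by
        simp_rw [sum_boolSign_smul_sum_boolSign_smul, S.map_smul_univ, prod_const, card_univ,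
          Fintype.card_fin]

lemma sum_apply_cons_boolSign (T : MultilinearMap R (fun _ : Fin (m + 1) => M) N) (e : ι → M)
    (θ : ι → R) :
    ∑ ε : Fin m → ι → Bool,
        T (Fin.cons (∑ j, (θ j * ∏ k, boolSign (ε k j)) • e j)
          (fun k => ∑ l, (boolSign (ε k l) : R) • e l)) =
      (2 ^ Fintype.card ι : R) ^ m • ∑ j, θ j • T (fun _ => e j) := by
  have hcurry : ∀ x w, T (Fin.cons x w) = T.curryLeft x w := fun _ _ => rfl
  simp_rw [hcurry, _root_.map_sum T.curryLeft, _root_.sum_apply, map_smul, smul_apply, mul_smul]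
  rw [sum_comm]
  simp_rw [← smul_sum, sum_prod_boolSign_smul_apply, curryLeft_apply, smul_comm (θ _), ← smul_sum]
  have hdiag : ∀ x : M, (Fin.cons x fun _ => x : Fin (m + 1) → M) = fun _ => x :=
    fun x => Fin.cons_self_tail (fun _ => x)
  simp_rw [hdiag]

end MultilinearMap

section Diagonal

variable {𝕂 : Type*} [RCLike 𝕂] {ι : Type*} [Fintype ι] [DecidableEq ι] {m : ℕ}

lemma PiLp.norm_sum_smul_basisFun_top_le_one (c : ι → 𝕂) (hc : ∀ l, ‖c l‖ ≤ 1) :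
    ‖∑ l, c l • PiLp.basisFun ⊤ 𝕂 ι l‖ ≤ 1 := by
  have hsum : ∑ l, c l • PiLp.basisFun ⊤ 𝕂 ι l = WithLp.toLp ⊤ c := by
    simpa using (PiLp.basisFun ⊤ 𝕂 ι).sum_repr (WithLp.toLp ⊤ c)
  rw [hsum, PiLp.norm_toLp]
  exact pi_norm_le_iff_of_nonneg zero_le_one |>.mpr hc

lemma norm_boolSign (b : Bool) : ‖(boolSign b : 𝕂)‖ = 1 := by
  cases b <;> simp [boolSign]

lemma ContinuousMultilinearMap.norm_sum_smul_apply_diag_le {F : Type*} [NormedAddCommGroup F]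
    [NormedSpace 𝕂 F]
    (T : ContinuousMultilinearMap 𝕂 (fun _ : Fin (m + 1) => PiLp ⊤ (fun _ : ι => 𝕂)) F)
    (θ : ι → 𝕂) (hθ : ∀ j, ‖θ j‖ ≤ 1) :
    ‖∑ j, θ j • T (fun _ => PiLp.basisFun ⊤ 𝕂 ι j)‖ ≤ ‖T‖ := by
  set e := PiLp.basisFun ⊤ 𝕂 ι
  set N : ℝ := (2 ^ Fintype.card ι) ^ m
  have hN : 0 < N := by positivity
  let x : (Fin m → ι → Bool) → Fin (m + 1) → PiLp ⊤ (fun _ : ι => 𝕂) := fun ε =>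
    Fin.cons (∑ j, (θ j * ∏ k, boolSign (ε k j)) • e j)
      (fun k => ∑ l, (boolSign (ε k l) : 𝕂) • e l)
  have hx : ∀ ε, ‖x ε‖ ≤ 1 := by
    intro ε
    refine pi_norm_le_iff_of_nonneg zero_le_one |>.mpr fun i => ?_
    cases i using Fin.cases with
    | zero =>
      refine PiLp.norm_sum_smul_basisFun_top_le_one _ fun j => ?_
      simpa [norm_prod, norm_boolSign] using hθ j
    | succ k => exact PiLp.norm_sum_smul_basisFun_top_le_one _ fun l => (norm_boolSign _).le
  have havg := T.toMultilinearMap.sum_apply_cons_boolSign e θ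
  refine le_of_mul_le_mul_left ?_ hN
  calc N * ‖∑ j, θ j • T (fun _ => e j)‖
      = ‖∑ ε, T (x ε)‖ := by
        rw [coe_coe] at havg
        simp [x, havg, norm_smul, N]
    _ ≤ ∑ ε, ‖T (x ε)‖ := norm_sum_le _ _
    _ ≤ ∑ _ε : Fin m → ι → Bool, ‖T‖ := sum_le_sum fun ε _ => T.unit_le_opNorm (hx ε)
    _ = N * ‖T‖ := by simp [N]

lemma RCLike.conj_div_norm_mul_self (a : 𝕂) : starRingEnd 𝕂 a / ‖a‖ * a = ‖a‖ := by
  rw [div_mul_eq_mul_div, RCLike.conj_mul, sq, mul_self_div_self]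

lemma RCLike.norm_conj_div_norm_le_one (a : 𝕂) : ‖starRingEnd 𝕂 a / ‖a‖‖ ≤ 1 := by
  rw [norm_div, RCLike.norm_conj, RCLike.norm_ofReal, abs_norm]
  exact div_self_le_one _

lemma ContinuousMultilinearMap.sum_norm_apply_diag_le
    (T : ContinuousMultilinearMap 𝕂 (fun _ : Fin (m + 1) => PiLp ⊤ (fun _ : ι => 𝕂)) 𝕂) :
    ∑ j, ‖T (fun _ => PiLp.basisFun ⊤ 𝕂 ι j)‖ ≤ ‖T‖ := by
  set a := fun j => T (fun _ => PiLp.basisFun ⊤ 𝕂 ι j)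
  calc ∑ j, ‖a j‖ = ‖∑ j, (starRingEnd 𝕂 (a j) / ‖a j‖) • a j‖ := by
        simp_rw [smul_eq_mul, RCLike.conj_div_norm_mul_self, ← RCLike.ofReal_sum,
          RCLike.norm_ofReal, abs_of_nonneg (sum_nonneg fun j _ => norm_nonneg (a j))]
    _ ≤ ‖T‖ := T.norm_sum_smul_apply_diag_le _ fun j => RCLike.norm_conj_div_norm_le_one (a j)

end Diagonal

/-- **Aron–Globevnik diagonal inequality.** For each `m ≥ 1` there is `C ≥ 1`
(not depending on `n`) such that for every `n ≥ 1` and every `m`-linear form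
`T : ℓ_∞^n × ⋯ × ℓ_∞^n → 𝕂`, `∑_{j=1}^n |T(e_j, …, e_j)| ≤ C ⬝ ‖T‖`. -/
theorem stmt16 (𝕂 : Type*) [RCLike 𝕂] (m : ℕ) (hm : 1 ≤ m) :
    ∃ C : ℝ, 1 ≤ C ∧ ∀ n : ℕ, 0 < n →
      ∀ T : ContinuousMultilinearMap 𝕂 (fun _ : Fin m => PiLp ⊤ (fun _ : Fin n => 𝕂)) 𝕂,
        ∑ j : Fin n,
            ‖T (fun _ => (WithLp.equiv ⊤ (Fin n → 𝕂)).symm (Pi.single j 1))‖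
          ≤ C * ‖T‖ := by
  obtain ⟨m, rfl⟩ := Nat.exists_eq_add_of_le' hm
  refine ⟨1, le_rfl, fun n _ T => ?_⟩
  simpa using T.sum_norm_apply_diag_le
end
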